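/- Let T be a finite tree rooted at a vertex x, let v_1, v_2, …, v_k be the children of x, and for each 1 ≤ i ≤ k let l_i denote the rooted transitive number of v_i, with l_1 ≤ l_2 ≤ … ≤ l_k. Let z be the largest integer such that there exists a subsequence l_{i_1} ≤ l_{i_2} ≤ … ≤ l_{i_z} of (l_1, …, l_k) with l_{i_j} ≥ j for all 1 ≤ j ≤ z. Then for every 1 ≤ j ≤ z and every s with j ≤ s ≤ min{l_{i_j}, z}, there exists a transitive partition π = {V_1, V_2, …, V_{1+z}} of T such that x ∈ V_{1+z} and v_{i_j} ∈ V_s. -/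
import Mathlib


variable {V : Type*}

/-- `A` dominates `B` in `G`: every vertex of `B` has a neighbour in `A`. -/
def Dominates (G : SimpleGraph V) (A B : Set V) : Prop :=
  ∀ b ∈ B, ∃ a ∈ A, G.Adj a b

/-- `P` is a partition of the set `W` into `k` (nonempty, pairwise disjoint) parts. -/
def IsPartitionOn (W : Set V) {k : ℕ} (P : Fin k → Set V) : Prop :=
  (∀ i, (P i).Nonempty) ∧ (Pairwise fun i j => Disjoint (P i) (P j)) ∧ (⋃ i, P i) = W

/-- `P` is an upper domatic partition of `G` (of size `k`). -/
def IsUpperDomaticPart (G : SimpleGraph V) {k : ℕ} (P : Fin k → Set V) : Prop :=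
  IsPartitionOn Set.univ P ∧
    ∀ i j : Fin k, i < j → Dominates G (P i) (P j) ∨ Dominates G (P j) (P i)

/-- `P` is a transitive partition of the set `W` (of size `k`), with respect to `G`. -/
def IsTransitivePartOn (G : SimpleGraph V) (W : Set V) {k : ℕ} (P : Fin k → Set V) : Prop :=
  IsPartitionOn W P ∧ ∀ i j : Fin k, i < j → Dominates G (P i) (P j)

/-- The upper domatic number `D(G)`. -/
noncomputable def upperDomaticNumber (G : SimpleGraph V) : ℕ :=
  sSup {k | ∃ P : Fin k → Set V, IsUpperDomaticPart G P}

/-- The transitivity `Tr(G)`. -/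
noncomputable def transitivityNumber (G : SimpleGraph V) : ℕ :=
  sSup {k | ∃ P : Fin k → Set V, IsTransitivePartOn G Set.univ P}

/-- The clique number `ω(G)`. -/
noncomputable def cliqueNumber (G : SimpleGraph V) : ℕ :=
  sSup {n | ∃ s : Finset V, G.IsNClique n s}

/-- The set of vertices reachable from `v` by a walk avoiding `x`.  When `G` is a
tree rooted at `x` and `v` is a child of `x`, this is the vertex set of the
subtree rooted at `v`. -/
def SubtreeAvoiding (G : SimpleGraph V) (x v : V) : Set V :=
  {u | ∃ w : G.Walk v u, x ∉ w.support}

/-- The transitive number of a vertex `v` with respect to the induced subgraph of `G`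
on the vertex set `W`: the largest `p` such that some transitive partition
`{V_1, …, V_k}` of `W` has `v ∈ V_p`. -/
noncomputable def transNumOn (G : SimpleGraph V) (W : Set V) (v : V) : ℕ :=
  sSup {p | ∃ (k : ℕ) (P : Fin k → Set V), IsTransitivePartOn G W P ∧
    ∃ i : Fin k, (i : ℕ) + 1 = p ∧ v ∈ P i}

open SimpleGraph in


private lemma partition_card_le [Fintype V] {W : Set V} {k : ℕ} {P : Fin k → Set V}
    (hP : IsPartitionOn W P) : k ≤ Fintype.card V := by
  have h : ∀ m : Fin k, ∃ u, u ∈ P m := fun m => hP.1 m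
  choose f hf using h
  have hinj : Function.Injective f := by
    intro a b hab
    by_contra hne
    exact Set.disjoint_left.mp (hP.2.1 hne) (hf a) (hab ▸ hf b)
  calc k = Fintype.card (Fin k) := (Fintype.card_fin k).symm
    _ ≤ Fintype.card V := Fintype.card_le_of_injective f hinj

private lemma truncate {G : SimpleGraph V} {W : Set V} {k : ℕ} {P : Fin k → Set V}
    (hP : IsTransitivePartOn G W P) {u : V} {i : Fin k} (hu : u ∈ P i)
    {p : ℕ} (hp1 : 1 ≤ p) (hp2 : p ≤ (i : ℕ) + 1) :
    ∃ Q : Fin p → Set V, IsTransitivePartOn G W Q ∧ u ∈ Q ⟨p - 1, by omega⟩ := by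
  have hik : (i : ℕ) < k := i.2
  refine ⟨fun m => if h : (m : ℕ) + 1 < p then P ⟨m, by omega⟩
      else ⋃ (r : Fin k) (_ : p - 1 ≤ (r : ℕ)), P r, ⟨⟨?_, ?_, ?_⟩, ?_⟩, ?_⟩
  · intro m
    by_cases h : (m : ℕ) + 1 < p
    · simpa [h] using hP.1.1 ⟨m, by omega⟩
    · refine ⟨u, ?_⟩
      simp only [h, dif_neg, not_false_iff, Set.mem_iUnion]
      exact ⟨i, by omega, hu⟩
  · intro m m' hne
    have hv : (m : ℕ) ≠ (m' : ℕ) := fun h => hne (Fin.ext h)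
    rw [Set.disjoint_left]
    intro a ha ha'
    by_cases h : (m : ℕ) + 1 < p <;> by_cases h' : (m' : ℕ) + 1 < p
    · simp only [h, dif_pos] at ha
      simp only [h', dif_pos] at ha'
      exact Set.disjoint_left.mp (hP.1.2.1 (by simp [Fin.ext_iff, hv] :
        (⟨(m : ℕ), by omega⟩ : Fin k) ≠ ⟨(m' : ℕ), by omega⟩)) ha ha'
    · simp only [h, dif_pos] at ha
      simp only [h', dif_neg, not_false_iff, Set.mem_iUnion] at ha'
      obtain ⟨r, hr, har⟩ := ha'
      have : (m : ℕ) < p - 1 := by have := m'.2; omega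
      exact Set.disjoint_left.mp (hP.1.2.1 (by simp [Fin.ext_iff]; omega :
        (⟨(m : ℕ), by omega⟩ : Fin k) ≠ r)) ha har
    · simp only [h', dif_pos] at ha'
      simp only [h, dif_neg, not_false_iff, Set.mem_iUnion] at ha
      obtain ⟨r, hr, har⟩ := ha
      have : (m' : ℕ) < p - 1 := by have := m.2; omega
      exact Set.disjoint_left.mp (hP.1.2.1 (by simp [Fin.ext_iff]; omega :
        (⟨(m' : ℕ), by omega⟩ : Fin k) ≠ r)) ha' har
    · exact hv (by have := m.2; have := m'.2; omega)
  · rw [← hP.1.2.2]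
    apply Set.Subset.antisymm
    · refine Set.iUnion_subset fun m => ?_
      by_cases h : (m : ℕ) + 1 < p
      · simp only [h, dif_pos]
        exact Set.subset_iUnion P ⟨m, by omega⟩
      · simp only [h, dif_neg, not_false_iff]
        exact Set.iUnion_subset fun r => Set.iUnion_subset fun _ => Set.subset_iUnion P r
    · refine Set.iUnion_subset fun r => ?_
      by_cases hr : (r : ℕ) + 1 < p
      · intro a ha
        refine Set.mem_iUnion.2 ⟨⟨r, by omega⟩, ?_⟩
        simp only [hr, dif_pos]
        exact (by convert ha using 2 <;> simp : a ∈ P ⟨((⟨(r:ℕ), by omega⟩ : Fin p) : ℕ), by omega⟩)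
      · intro a ha
        refine Set.mem_iUnion.2 ⟨⟨p - 1, by omega⟩, ?_⟩
        have : ¬ ((p - 1 : ℕ) + 1 < p) := by omega
        simp only [this, dif_neg, not_false_iff, Set.mem_iUnion]
        exact ⟨r, by omega, ha⟩
  · intro a b hab w hw
    have ha : (a : ℕ) + 1 < p := by have := b.2; have : (a : ℕ) < (b : ℕ) := hab; omega
    by_cases hb : (b : ℕ) + 1 < p
    · simp only [hb, dif_pos] at hw
      obtain ⟨c, hc, hcw⟩ := hP.2 ⟨a, by omega⟩ ⟨b, by omega⟩ (by simpa using (hab : (a:ℕ) < b)) w hw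
      exact ⟨c, by simpa [ha] using hc, hcw⟩
    · simp only [hb, dif_neg, not_false_iff, Set.mem_iUnion] at hw
      obtain ⟨r, hr, hwr⟩ := hw
      have hab' : (a : ℕ) < (b : ℕ) := hab
      have hbp : (b : ℕ) = p - 1 := by have := b.2; omega
      obtain ⟨c, hc, hcw⟩ := hP.2 ⟨a, by omega⟩ r (by simp [Fin.lt_def]; omega) w hwr
      exact ⟨c, by simpa [ha] using hc, hcw⟩
  · have : ¬ ((p - 1 : ℕ) + 1 < p) := by omega
    simp only [this, dif_neg, not_false_iff, Set.mem_iUnion]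
    exact ⟨i, by omega, hu⟩

open SimpleGraph in
private lemma exists_part_at (G : SimpleGraph V) [Fintype V] {W : Set V} {u : V} (hu : u ∈ W)
    {s : ℕ} (hs1 : 1 ≤ s) (hs : s ≤ transNumOn G W u) :
    ∃ Q : Fin s → Set V, IsTransitivePartOn G W Q ∧ u ∈ Q ⟨s - 1, by omega⟩ := by
  set S := {p | ∃ (k : ℕ) (P : Fin k → Set V), IsTransitivePartOn G W P ∧
    ∃ i : Fin k, (i : ℕ) + 1 = p ∧ u ∈ P i} with hS
  have hne : S.Nonempty := by
    refine ⟨1, 1, fun _ => W, ⟨⟨fun _ => ⟨u, hu⟩, ?_, Set.iUnion_const W⟩, ?_⟩, ⟨0, rfl, hu⟩⟩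
    · intro a b hab; exact absurd (Subsingleton.elim a b) hab
    · intro a b hab; exact absurd (Subsingleton.elim a b) hab.ne
  have hbdd : BddAbove S := by
    refine ⟨Fintype.card V, fun p hp => ?_⟩
    obtain ⟨k, P, hP, i, hi, _⟩ := hp
    have := partition_card_le hP.1
    have := i.2
    omega
  have hmem : sSup S ∈ S := Nat.sSup_mem hne hbdd
  obtain ⟨k, P, hP, i, hi, hui⟩ := hmem
  have : s ≤ (i : ℕ) + 1 := by
    have : transNumOn G W u = sSup S := rfl
    omega
  exact truncate hP hui hs1 this

open SimpleGraph in
private lemma not_mem_subtree (G : SimpleGraph V) (x u : V) : x ∉ SubtreeAvoiding G x u := by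
  rintro ⟨w, hw⟩
  exact hw w.end_mem_support

open SimpleGraph in
private lemma self_mem_subtree {G : SimpleGraph V} {x u : V} (h : G.Adj x u) :
    u ∈ SubtreeAvoiding G x u :=
  ⟨SimpleGraph.Walk.nil, by simp [h.ne]⟩

open SimpleGraph in
private lemma subtree_subset_ne (G : SimpleGraph V) (x c u : V) (hu : u ∈ SubtreeAvoiding G x c) :
    u ≠ x := by
  rintro rfl
  exact not_mem_subtree G u c hu

open SimpleGraph in
private lemma subtree_disjoint {G : SimpleGraph V} (hT : G.IsTree) {x a b : V} (ha : G.Adj x a)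
    (hb : G.Adj x b) (hab : a ≠ b) :
    Disjoint (SubtreeAvoiding G x a) (SubtreeAvoiding G x b) := by
  classical
  rw [Set.disjoint_left]
  rintro u ⟨w1, h1⟩ ⟨w2, h2⟩
  set w : G.Walk a b := w1.append w2.reverse with hw
  have hxw : x ∉ w.support := by
    rw [hw, Walk.mem_support_append_iff]
    push_neg
    exact ⟨h1, by rwa [Walk.support_reverse, List.mem_reverse]⟩
  have hxp : x ∉ (w.toPath : G.Walk a b).support := fun hx =>
    hxw (Walk.support_toPath_subset w hx)
  have hq : (Walk.cons ha.symm (Walk.cons hb Walk.nil) : G.Walk a b).IsPath := by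
    simp [Walk.cons_isPath_iff, ha.ne, hb.ne, ha.ne', hb.ne', hab]
  have := hT.IsAcyclic.path_unique w.toPath ⟨_, hq⟩
  rw [this] at hxp
  simp at hxp

open SimpleGraph in
private lemma subtree_cover {G : SimpleGraph V} (hT : G.IsTree) (x u : V) (hu : u ≠ x) :
    ∃ c, G.Adj x c ∧ u ∈ SubtreeAvoiding G x c := by
  classical
  obtain ⟨w⟩ := hT.isConnected.preconnected x u
  have hp : (w.toPath : G.Walk x u).IsPath := w.toPath.2
  generalize hq : (w.toPath : G.Walk x u) = p at hp
  clear hq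
  cases p with
  | nil => exact absurd rfl hu
  | @cons _ c _ h q =>
    rw [Walk.cons_isPath_iff] at hp
    exact ⟨c, h, q, hp.2⟩

/-- With the setup of Lemma 3.2, for every `1 ≤ j ≤ z` and every `s` with
`j ≤ s ≤ min {l_{i_j}, z}`, there is a transitive partition `{V_1, …, V_{1+z}}` of `T`
with `x ∈ V_{1+z}` and `v_{i_j} ∈ V_s`. -/
theorem tree_transPartition_child_position [Fintype V] (G : SimpleGraph V) (hT : G.IsTree)
    (x : V) (k : ℕ) (v : Fin k → V) (hinj : Function.Injective v)
    (hrange : Set.range v = G.neighborSet x)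
    (l : Fin k → ℕ)
    (hl : ∀ i, l i = transNumOn G (SubtreeAvoiding G x (v i)) (v i))
    (hmono : Monotone l)
    (z : ℕ) (idx : Fin z → Fin k) (hidx : StrictMono idx)
    (hidxl : ∀ t : Fin z, (t : ℕ) + 1 ≤ l (idx t))
    (hzmax : ∀ m : ℕ,
      (∃ f : Fin m → Fin k, StrictMono f ∧ ∀ t : Fin m, (t : ℕ) + 1 ≤ l (f t)) → m ≤ z) :
    ∀ (j : Fin z) (s : ℕ), ∀ _hs1 : (j : ℕ) + 1 ≤ s, ∀ _hs2 : s ≤ min (l (idx j)) z,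
      ∃ P : Fin (1 + z) → Set V, IsTransitivePartOn G Set.univ P ∧
        x ∈ P ⟨z, by omega⟩ ∧ v (idx j) ∈ P ⟨s - 1, by omega⟩ := by

  classical
  intro j s hs1 hs2
  have hz : 0 < z := lt_of_le_of_lt (Nat.zero_le _) j.2
  have hsz : s ≤ z := le_trans hs2 (min_le_right _ _)
  have hsl : s ≤ l (idx j) := le_trans hs2 (min_le_left _ _)
  have hs0 : 1 ≤ s := by omega
  have hadj : ∀ i : Fin k, G.Adj x (v i) := by
    intro i
    have : v i ∈ Set.range v := Set.mem_range_self i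
    rw [hrange] at this
    exact this
  obtain ⟨t0, ht0⟩ : ∃ t0 : Fin z, (t0 : ℕ) = s - 1 := ⟨⟨s - 1, by omega⟩, rfl⟩
  set σ : Equiv.Perm (Fin z) := Equiv.swap j t0 with hσdef
  have hσj : σ j = t0 := Equiv.swap_apply_left j t0
  have hσjv : ((σ j : Fin z) : ℕ) = s - 1 := by rw [hσj, ht0]
  have hσ : ∀ t : Fin z, (σ t : ℕ) + 1 ≤ l (idx t) := by
    intro t
    by_cases h1 : t = j
    · subst h1; omega
    · by_cases h2 : t = t0
      · rw [h2, hσdef, Equiv.swap_apply_right]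
        have := hidxl t0
        omega
      · rw [hσdef, Equiv.swap_apply_of_ne_of_ne h1 h2]
        exact hidxl t
  -- subtree partitions
  have hQex : ∀ t : Fin z, ∃ Q : Fin ((σ t : ℕ) + 1) → Set V,
      IsTransitivePartOn G (SubtreeAvoiding G x (v (idx t))) Q ∧
        v (idx t) ∈ Q ⟨(σ t : ℕ), by omega⟩ := by
    intro t
    have hmem := self_mem_subtree (hadj (idx t))
    have hle : (σ t : ℕ) + 1 ≤ transNumOn G (SubtreeAvoiding G x (v (idx t))) (v (idx t)) := by
      rw [← hl]; exact hσ t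
    obtain ⟨Q, hQ, hQv⟩ := exists_part_at G hmem (by omega) hle
    exact ⟨Q, hQ, hQv⟩
  choose Q hQ hQv using hQex
  have hQsub : ∀ (t : Fin z) (m : Fin ((σ t : ℕ) + 1)),
      Q t m ⊆ SubtreeAvoiding G x (v (idx t)) := by
    intro t m
    rw [← (hQ t).1.2.2]
    exact Set.subset_iUnion _ m
  have hWdisj : ∀ t t' : Fin z, t ≠ t' →
      Disjoint (SubtreeAvoiding G x (v (idx t))) (SubtreeAvoiding G x (v (idx t'))) := by
    intro t t' htt
    exact subtree_disjoint hT (hadj (idx t)) (hadj (idx t'))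
      (fun h => htt (hidx.injective (hinj h)))
  set R : Set V := Set.univ \ ({x} ∪ ⋃ t : Fin z, SubtreeAvoiding G x (v (idx t))) with hR
  set P : Fin (1 + z) → Set V := fun m =>
    if hm : (m : ℕ) < z then
      (⋃ (t : Fin z) (h : (m : ℕ) ≤ (σ t : ℕ)), Q t ⟨(m : ℕ), by omega⟩) ∪
        (if (m : ℕ) = 0 then R else ∅)
    else {x} with hP
  have hPlow : ∀ (m : Fin (1 + z)) (hm : (m : ℕ) < z),
      P m = (⋃ (t : Fin z) (h : (m : ℕ) ≤ (σ t : ℕ)), Q t ⟨(m : ℕ), by omega⟩) ∪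
        (if (m : ℕ) = 0 then R else ∅) := by
    intro m hm; rw [hP]; simp only [hm, dif_pos]
  have hPhigh : ∀ (m : Fin (1 + z)), ¬ ((m : ℕ) < z) → P m = {x} := by
    intro m hm; rw [hP]; simp only [hm, dif_neg, not_false_iff]
  -- membership characterization for low parts
  have hmemQ : ∀ (t : Fin z) (m : Fin (1 + z)) (hm : (m : ℕ) ≤ (σ t : ℕ)) (a : V),
      a ∈ Q t ⟨(m : ℕ), by omega⟩ → a ∈ P m := by
    intro t m hm a ha
    rw [hPlow m (by have := (σ t).2; omega)]
    exact Or.inl (Set.mem_iUnion.2 ⟨t, Set.mem_iUnion.2 ⟨hm, ha⟩⟩)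
  refine ⟨P, ⟨⟨?_, ?_, ?_⟩, ?_⟩, ?_, ?_⟩
  · -- nonempty
    intro m
    by_cases hm : (m : ℕ) < z
    · set t : Fin z := σ.symm ⟨(m : ℕ), hm⟩ with ht
      have hst : σ t = ⟨(m : ℕ), hm⟩ := Equiv.apply_symm_apply σ _
      have hmσ : (m : ℕ) ≤ (σ t : ℕ) := by rw [hst]
      obtain ⟨a, ha⟩ := (hQ t).1.1 ⟨(m : ℕ), by omega⟩
      exact ⟨a, hmemQ t m hmσ a ha⟩
    · rw [hPhigh m hm]; exact ⟨x, rfl⟩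
  · -- pairwise disjoint
    intro m m' hne
    have hvne : (m : ℕ) ≠ (m' : ℕ) := fun h => hne (Fin.ext h)
    rw [Set.disjoint_left]
    intro a ha ha'
    by_cases hm : (m : ℕ) < z <;> by_cases hm' : (m' : ℕ) < z
    · rw [hPlow m hm] at ha
      rw [hPlow m' hm'] at ha'
      rcases ha with ha | ha
      · obtain ⟨t, ht⟩ := Set.mem_iUnion.1 ha
        obtain ⟨htm, hat⟩ := Set.mem_iUnion.1 ht
        rcases ha' with ha' | ha'
        · obtain ⟨t', ht'⟩ := Set.mem_iUnion.1 ha'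
          obtain ⟨htm', hat'⟩ := Set.mem_iUnion.1 ht'
          by_cases htt : t = t'
          · subst htt
            exact Set.disjoint_left.mp ((hQ t).1.2.1
              (by simp only [ne_eq, Fin.mk.injEq]; exact hvne :
                (⟨(m : ℕ), by omega⟩ : Fin ((σ t : ℕ) + 1)) ≠ ⟨(m' : ℕ), by omega⟩)) hat hat'
          · exact Set.disjoint_left.mp (hWdisj t t' htt) (hQsub t _ hat) (hQsub t' _ hat')
        · have : (m' : ℕ) = 0 := by by_contra h; simp [h] at ha'
          rw [this, if_pos rfl] at ha'
          exact ha'.2 (Or.inr (Set.mem_iUnion.2 ⟨t, hQsub t _ hat⟩))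
      · have hm0 : (m : ℕ) = 0 := by by_contra h; simp [h] at ha
        rw [hm0, if_pos rfl] at ha
        rcases ha' with ha' | ha'
        · obtain ⟨t', ht'⟩ := Set.mem_iUnion.1 ha'
          obtain ⟨htm', hat'⟩ := Set.mem_iUnion.1 ht'
          exact ha.2 (Or.inr (Set.mem_iUnion.2 ⟨t', hQsub t' _ hat'⟩))
        · have : (m' : ℕ) = 0 := by by_contra h; simp [h] at ha'
          omega
    · rw [hPhigh m' hm'] at ha'
      rw [hPlow m hm] at ha
      have hax : a = x := ha'
      subst hax
      rcases ha with ha | ha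
      · obtain ⟨t, ht⟩ := Set.mem_iUnion.1 ha
        obtain ⟨htm, hat⟩ := Set.mem_iUnion.1 ht
        exact not_mem_subtree G a _ (hQsub t _ hat)
      · have : (m : ℕ) = 0 := by by_contra h; simp [h] at ha
        rw [this, if_pos rfl] at ha
        exact ha.2 (Or.inl rfl)
    · rw [hPhigh m hm] at ha
      rw [hPlow m' hm'] at ha'
      have hax : a = x := ha
      subst hax
      rcases ha' with ha' | ha'
      · obtain ⟨t, ht⟩ := Set.mem_iUnion.1 ha'
        obtain ⟨htm, hat⟩ := Set.mem_iUnion.1 ht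
        exact not_mem_subtree G a _ (hQsub t _ hat)
      · have : (m' : ℕ) = 0 := by by_contra h; simp [h] at ha'
        rw [this, if_pos rfl] at ha'
        exact ha'.2 (Or.inl rfl)
    · exact hvne (by have := m.2; have := m'.2; omega)
  · -- union is univ
    apply Set.eq_univ_of_forall
    intro a
    by_cases hax : a = x
    · subst hax
      refine Set.mem_iUnion.2 ⟨⟨z, by omega⟩, ?_⟩
      rw [hPhigh _ (by simp)]
      rfl
    · by_cases haW : ∃ t : Fin z, a ∈ SubtreeAvoiding G x (v (idx t))
      · obtain ⟨t, hat⟩ := haW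
        have : a ∈ ⋃ m, Q t m := by rw [(hQ t).1.2.2]; exact hat
        obtain ⟨m', hm'⟩ := Set.mem_iUnion.1 this
        have hmz : (m' : ℕ) < z := by have := m'.2; have := (σ t).2; omega
        have hm'σ : (m' : ℕ) ≤ (σ t : ℕ) := by have := m'.2; omega
        refine Set.mem_iUnion.2 ⟨⟨(m' : ℕ), by omega⟩,
          hmemQ t ⟨(m' : ℕ), by omega⟩ hm'σ a ?_⟩
        exact hm'
      · refine Set.mem_iUnion.2 ⟨⟨0, by omega⟩, ?_⟩
        rw [hPlow _ (by simpa using hz)]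
        refine Or.inr ?_
        rw [if_pos rfl]
        refine ⟨Set.mem_univ a, ?_⟩
        rintro (h | h)
        · exact hax h
        · obtain ⟨t, ht⟩ := Set.mem_iUnion.1 h
          exact haW ⟨t, ht⟩
  · -- transitivity
    intro a b hab u hu
    have hab' : (a : ℕ) < (b : ℕ) := hab
    have haz : (a : ℕ) < z := by have := b.2; omega
    by_cases hbz : (b : ℕ) < z
    · rw [hPlow b hbz] at hu
      rcases hu with hu | hu
      · obtain ⟨t, ht⟩ := Set.mem_iUnion.1 hu
        obtain ⟨htm, hut⟩ := Set.mem_iUnion.1 ht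
        obtain ⟨c, hc, hcu⟩ := (hQ t).2 ⟨(a : ℕ), by omega⟩ ⟨(b : ℕ), by omega⟩
          (by simp only [Fin.mk_lt_mk]; omega) u hut
        exact ⟨c, hmemQ t a (by omega) c hc, hcu⟩
      · have : (b : ℕ) = 0 := by by_contra h; simp [h] at hu
        omega
    · rw [hPhigh b hbz] at hu
      have hux : u = x := hu
      subst hux
      set t : Fin z := σ.symm ⟨(a : ℕ), haz⟩ with htdef
      have hst : σ t = ⟨(a : ℕ), haz⟩ := Equiv.apply_symm_apply σ _
      have hstv : ((σ t : Fin z) : ℕ) = (a : ℕ) := by rw [hst]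
      refine ⟨v (idx t), ?_, (hadj (idx t)).symm⟩
      refine hmemQ t a (by omega) _ ?_
      convert hQv t using 2
      exact Fin.ext hstv.symm
  · -- x ∈ P ⟨z⟩
    rw [hPhigh _ (by simp)]
    rfl
  · -- v (idx j) ∈ P ⟨s-1⟩
    refine hmemQ j ⟨s - 1, by omega⟩ (by simp only [Fin.val_mk]; omega) _ ?_
    convert hQv j using 2
    exact Fin.ext hσjv.symm
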